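/- Let G(z,t) = exp[−(εt/(2h))(z−1)(z−3) + (t/h²)(z−1)²]. Then ∂G/∂z at z = 1 equals εt/h, and ∂²G/∂z² at z = 1 equals (εt/h)² − εt/h + 2t/h². Consequently the mean of the distribution u_j(t) is μ_j = εt/h and the variance is σ_j² = 2t/h², so in physical coordinates the mean location is εt and the variance is 2t, exactly matching the advection-diffusion PDE for all time. -/

import Mathlib

/-!
Around `z = 1` the exponent of `G` is the quadratic `a (z - 1)² + b (z - 1)` with `b = εt/h` and
`a = t/h² − εt/(2h)`, so `G(1) = 1`, `G'(1) = b` and `G''(1) = b² + 2a`. Hence the variance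
`G'' + G' − G'² = 2a + b = 2t/h²` is free of `ε`.
-/

/-- The moment generating function of the second-order upwind scheme. -/
noncomputable def mgf (ε h z t : ℝ) : ℝ :=
  Real.exp (-(ε * t / (2 * h)) * (z - 1) * (z - 3) + t / h ^ 2 * (z - 1) ^ 2)

section ExpQuadratic

variable (a b c : ℝ)

theorem hasDerivAt_exp_quadratic (z : ℝ) :
    HasDerivAt (fun z => Real.exp (a * (z - c) ^ 2 + b * (z - c)))
      (Real.exp (a * (z - c) ^ 2 + b * (z - c)) * (2 * a * (z - c) + b)) z := by
  have hexponent : HasDerivAt (fun z => a * (z - c) ^ 2 + b * (z - c))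
      (2 * a * (z - c) + b) z := by
    refine ((((hasDerivAt_id' z).sub_const c).fun_pow 2).const_mul a |>.fun_add
      (((hasDerivAt_id' z).sub_const c).const_mul b)).congr_deriv ?_
    ring
  exact hexponent.exp

theorem deriv_exp_quadratic :
    deriv (fun z => Real.exp (a * (z - c) ^ 2 + b * (z - c))) c = b := by
  simp [(hasDerivAt_exp_quadratic a b c c).deriv]

theorem iteratedDeriv_two_exp_quadratic :
    iteratedDeriv 2 (fun z => Real.exp (a * (z - c) ^ 2 + b * (z - c))) c = b ^ 2 + 2 * a := by
  have hslope : HasDerivAt (fun z => 2 * a * (z - c) + b) (2 * a) c := by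
    simpa using (((hasDerivAt_id c).sub_const c).const_mul (2 * a)).add_const b
  rw [iteratedDeriv_succ, iteratedDeriv_one,
    funext fun z => (hasDerivAt_exp_quadratic a b c z).deriv,
    ((hasDerivAt_exp_quadratic a b c c).fun_mul hslope).deriv]
  simp only [sub_self, ne_eq, OfNat.ofNat_ne_zero, not_false_eq_true, zero_pow, mul_zero,
    add_zero, Real.exp_zero, one_mul]
  ring

end ExpQuadratic

theorem mgf_eq_exp_quadratic (ε h t : ℝ) :
    (fun z => mgf ε h z t) = fun z =>
      Real.exp ((t / h ^ 2 - ε * t / (2 * h)) * (z - 1) ^ 2 + ε * t / h * (z - 1)) := by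
  funext z
  rw [mgf]
  congr 1
  ring

theorem mgf_mean_variance_general (ε h : ℝ) (hh : 0 < h) (t : ℝ) :
    deriv (fun z => mgf ε h z t) 1 = ε * t / h ∧
    iteratedDeriv 2 (fun z => mgf ε h z t) 1 = (ε * t / h) ^ 2 - ε * t / h + 2 * t / h ^ 2 ∧
    iteratedDeriv 2 (fun z => mgf ε h z t) 1 + deriv (fun z => mgf ε h z t) 1
        - (deriv (fun z => mgf ε h z t) 1) ^ 2 = 2 * t / h ^ 2 ∧
    h * deriv (fun z => mgf ε h z t) 1 = ε * t ∧
    h ^ 2 * (iteratedDeriv 2 (fun z => mgf ε h z t) 1 + deriv (fun z => mgf ε h z t) 1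
        - (deriv (fun z => mgf ε h z t) 1) ^ 2) = 2 * t := by
  have hmean : deriv (fun z => mgf ε h z t) 1 = ε * t / h := by
    rw [mgf_eq_exp_quadratic, deriv_exp_quadratic]
  have hsecond : iteratedDeriv 2 (fun z => mgf ε h z t) 1
      = (ε * t / h) ^ 2 - ε * t / h + 2 * t / h ^ 2 := by
    rw [mgf_eq_exp_quadratic, iteratedDeriv_two_exp_quadratic]
    ring
  rw [hmean, hsecond]
  refine ⟨rfl, rfl, by ring, by field_simp, by field_simp; ring⟩

/-- `G_z(1,t) = εt/h`, `G_zz(1,t) = (εt/h)² − εt/h + 2t/h²`; hence the mean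
`μ_j = G_z(1,t)` is `εt/h`, the variance `σ_j² = G_zz + G_z − G_z²` is `2t/h²`,
and in physical coordinates the mean is `εt` and the variance is `2t`. -/
theorem mgf_mean_variance (ε h : ℝ) (hε : 0 < ε) (hh : 0 < h) (t : ℝ) :
    deriv (fun z => mgf ε h z t) 1 = ε * t / h ∧
    iteratedDeriv 2 (fun z => mgf ε h z t) 1 = (ε * t / h) ^ 2 - ε * t / h + 2 * t / h ^ 2 ∧
    iteratedDeriv 2 (fun z => mgf ε h z t) 1 + deriv (fun z => mgf ε h z t) 1
        - (deriv (fun z => mgf ε h z t) 1) ^ 2 = 2 * t / h ^ 2 ∧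
    h * deriv (fun z => mgf ε h z t) 1 = ε * t ∧
    h ^ 2 * (iteratedDeriv 2 (fun z => mgf ε h z t) 1 + deriv (fun z => mgf ε h z t) 1
        - (deriv (fun z => mgf ε h z t) 1) ^ 2) = 2 * t :=
  mgf_mean_variance_general ε h hh t
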